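/- arXiv:1504.06163 — 2 statements merged into one kernel-verified Lean document; each statement's English description precedes it below -/
import Mathlib

section
/- For an element a ∈ R, a belongs to ca^n(R) if and only if a annihilates Ext_R^n(M,N) for all finitely generated R-modules M and N, i.e., ca^n(R) = ⋂_{M,N} Ann_R Ext_R^n(M,N). -/
open CategoryTheory IsLocalRing

noncomputable section

/-- The `n`-th Ext module of two `R`-modules. -/
def extMod (R : Type) [CommRing R] (n : ℕ) (M N : ModuleCat R) : ModuleCat R :=
  ((Ext R (ModuleCat R) n).obj (Opposite.op M)).obj N

/-- The `n`-th cohomology annihilator `ca^n(R)`. -/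
def caIdeal (R : Type) [CommRing R] (n : ℕ) : Ideal R where
  carrier := {a | ∀ (M N : ModuleCat R), Module.Finite R M → Module.Finite R N →
      ∀ i, n ≤ i → ∀ x : extMod R i M N, a • x = 0}
  add_mem' := by
    intro a b ha hb M N hM hN i hi x
    rw [add_smul, ha M N hM hN i hi x, hb M N hM hN i hi x, add_zero]
  zero_mem' := by intro M N hM hN i hi x; simp
  smul_mem' := by
    intro c a ha M N hM hN i hi x
    rw [smul_eq_mul, mul_smul, ha M N hM hN i hi x, smul_zero]

/-- `M` is an `n`-th syzygy of `X` (with respect to finite free resolutions). -/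
def IsSyz (R : Type) [CommRing R] : ℕ → ModuleCat R → ModuleCat R → Prop
  | 0, M, X => Nonempty (M ≅ X)
  | n + 1, M, X => ∃ (P Y : ModuleCat R) (f : M ⟶ P) (g : P ⟶ Y),
      Module.Free R P ∧ Module.Finite R P ∧ Function.Injective f ∧
      Function.Surjective g ∧ Function.Exact f g ∧ IsSyz R n Y X

/-- `M` is a direct summand of `N`. -/
def Summand (R : Type) [CommRing R] (M N : ModuleCat R) : Prop :=
  ∃ (i : M ⟶ N) (p : N ⟶ M), i ≫ p = 𝟙 M

/-- `M` belongs to `add X`. -/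
def InAdd (R : Type) [CommRing R] (X M : ModuleCat R) : Prop :=
  ∃ k : ℕ, Summand R M (ModuleCat.of R (Fin k → X))

/-- `M` has a filtration of length `r` whose subquotients lie in `C`. -/
def Filt (R : Type) [CommRing R] (C : ModuleCat R → Prop) : ℕ → ModuleCat R → Prop
  | 0, M => Subsingleton M
  | r + 1, M => ∃ (A B : ModuleCat R) (f : A ⟶ M) (g : M ⟶ B),
      Function.Injective f ∧ Function.Surjective g ∧ Function.Exact f g ∧
      Filt R C r A ∧ C B

/-- the ball `|X|_r`. -/
def InBall (R : Type) [CommRing R] (X : ModuleCat R) (r : ℕ) (M : ModuleCat R) : Prop :=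
  ∃ N, Filt R (InAdd R X) r N ∧ Summand R M N

/-- the extension closure of a class of modules. -/
inductive ExtClosed (R : Type) [CommRing R] (C : ModuleCat R → Prop) : ModuleCat R → Prop
  | base {M} : C M → ExtClosed R C M
  | summand {M N} : ExtClosed R C N → Summand R M N → ExtClosed R C M
  | extension {A E B : ModuleCat R} (f : A ⟶ E) (g : E ⟶ B) :
      Function.Injective f → Function.Surjective g → Function.Exact f g →
      ExtClosed R C A → ExtClosed R C B → ExtClosed R C E

/-- the thick closure of a class of modules. -/
inductive ThickClosed (R : Type) [CommRing R] (C : ModuleCat R → Prop) : ModuleCat R → Prop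
  | base {M} : C M → ThickClosed R C M
  | summand {M N} : ThickClosed R C N → Summand R M N → ThickClosed R C M
  | ext2 {A E B : ModuleCat R} (f : A ⟶ E) (g : E ⟶ B) :
      Function.Injective f → Function.Surjective g → Function.Exact f g →
      ThickClosed R C A → ThickClosed R C B → ThickClosed R C E
  | ker2 {A E B : ModuleCat R} (f : A ⟶ E) (g : E ⟶ B) :
      Function.Injective f → Function.Surjective g → Function.Exact f g →
      ThickClosed R C E → ThickClosed R C B → ThickClosed R C A
  | coker2 {A E B : ModuleCat R} (f : A ⟶ E) (g : E ⟶ B) :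
      Function.Injective f → Function.Surjective g → Function.Exact f g →
      ThickClosed R C A → ThickClosed R C E → ThickClosed R C B

/-- A (noetherian) local ring is regular if its maximal ideal can be generated by
`dim` many elements. -/
def IsRegularLocal (A : Type) [CommRing A] [IsLocalRing A] : Prop :=
  IsNoetherianRing A ∧ ∃ s : Finset A, Ideal.span (s : Set A) = maximalIdeal A ∧
    (s.card : WithBot (WithTop ℕ)) = ringKrullDim A

/-!
Dimension shifting. For a finitely generated `M`, choose a surjection `F → M` from a finite free
module; its kernel `K` is finitely generated because `R` is noetherian. Splicing a projective
resolution of `K` onto `K → F → M` gives one of `M` whose complex `Hom(-, N)` agrees with that of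
`K` from degree one on, shifted by one. Hence `Ext^i(K, N)` surjects onto `Ext^(i+1)(M, N)`, so an
element killing `Ext^i` of all finitely generated modules also kills their `Ext^(i+1)`, and by
induction every `Ext^j` with `j ≥ n`.
-/

open Limits

namespace CategoryTheory.ProjectiveResolution

variable {C : Type*} [Category C] [Abelian C]

/-- `Q.π.f 0` with codomain `X` itself: the degree `0` object of the single complex is `X` only up
to unfolding, which `rw` and `simp` do not see through. -/
def augmentation {X : C} (Q : ProjectiveResolution X) : Q.complex.X 0 ⟶ X := Q.π.f 0

lemma d_comp_augmentation {X : C} (Q : ProjectiveResolution X) :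
    Q.complex.d 1 0 ≫ Q.augmentation = 0 :=
  Q.complex_d_comp_π_f_zero

lemma exact_augmentation {X : C} (Q : ProjectiveResolution X) :
    (ShortComplex.mk _ _ Q.d_comp_augmentation).Exact :=
  Q.exact₀

instance {X : C} (Q : ProjectiveResolution X) : Epi Q.augmentation :=
  inferInstanceAs (Epi (Q.π.f 0))

variable {S : ShortComplex C} (Q : ProjectiveResolution S.X₁)

lemma d_comp_augmentation_comp_f : Q.complex.d 1 0 ≫ Q.augmentation ≫ S.f = 0 := by
  rw [← Category.assoc, d_comp_augmentation, zero_comp]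

lemma exact_augmentation_comp_f (hS : S.ShortExact) :
    (ShortComplex.mk (Q.augmentation ≫ S.f) S.g (by simp)).Exact := by
  let φ : ShortComplex.mk (Q.augmentation ≫ S.f) S.g (by simp) ⟶ S :=
    { τ₁ := Q.augmentation, τ₂ := 𝟙 _, τ₃ := 𝟙 _ }
  exact (ShortComplex.exact_iff_of_epi_of_isIso_of_mono φ).2 hS.exact

lemma exact_d_augmentation_comp_f (hS : S.ShortExact) :
    (ShortComplex.mk _ _ Q.d_comp_augmentation_comp_f).Exact := by
  have := hS.mono_f
  let φ : ShortComplex.mk _ _ Q.d_comp_augmentation ⟶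
      ShortComplex.mk _ _ Q.d_comp_augmentation_comp_f :=
    { τ₁ := 𝟙 _, τ₂ := 𝟙 _, τ₃ := S.f }
  exact (ShortComplex.exact_iff_of_epi_of_isIso_of_mono φ).1 Q.exact_augmentation

variable (S) in
def spliceComplex : ChainComplex C ℕ :=
  Q.complex.augment (Q.augmentation ≫ S.f) Q.d_comp_augmentation_comp_f

lemma spliceComplex_d_one_zero_comp_g : (Q.spliceComplex S).d 1 0 ≫ S.g = 0 :=
  (Category.assoc _ _ _).trans ((congrArg _ S.zero).trans comp_zero)

/-- The projective resolution `⋯ → Q₁ → Q₀ → S.X₂ → S.X₃` of `S.X₃` spliced from a projective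
resolution `Q` of `S.X₁`. -/
def splice (hS : S.ShortExact) [Projective S.X₂] : ProjectiveResolution S.X₃ where
  complex := Q.spliceComplex S
  projective
    | 0 => (inferInstance : Projective S.X₂)
    | n + 1 => Q.projective n
  π := (ChainComplex.toSingle₀Equiv _ _).symm ⟨S.g, Q.spliceComplex_d_one_zero_comp_g⟩
  quasiIso := ⟨fun n => by
    have hπ := ChainComplex.toSingle₀Equiv_symm_apply_f_zero (C := Q.spliceComplex S) S.g
      Q.spliceComplex_d_one_zero_comp_g
    rcases n with _ | _ | n
    · rw [ChainComplex.quasiIsoAt₀_iff, ShortComplex.quasiIso_iff_of_zeros' _ rfl rfl rfl]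
      refine ⟨?_, (congrArg Epi hπ).mpr hS.epi_g⟩
      convert Q.exact_augmentation_comp_f hS using 2
      all_goals first | rfl | exact heq_of_eq hπ
    · rw [quasiIsoAt_iff_exactAt' _ _ (ChainComplex.exactAt_succ_single_obj _ _),
        HomologicalComplex.exactAt_iff' _ 2 1 0 (by simp) (by simp)]
      exact Q.exact_d_augmentation_comp_f hS
    · rw [quasiIsoAt_iff_exactAt' _ _ (ChainComplex.exactAt_succ_single_obj _ _),
        HomologicalComplex.exactAt_iff' _ (n + 3) (n + 2) (n + 1) (by simp) (by simp)]
      exact Q.exact_succ n⟩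

variable {R : Type*} [Ring R] [Linear R C]

lemma splice_linearYonedaObj_d (hS : S.ShortExact) [Projective S.X₂] (N : C) (i j : ℕ) :
    ((Q.splice hS).complex.linearYonedaObj R N).d (i + 1) (j + 1) =
      (Q.complex.linearYonedaObj R N).d i j := by
  cases j <;> rfl

variable [EnoughProjectives C]

lemma exists_epi_ext_of_hom_sc' {X Y : C} (P : ProjectiveResolution X)
    (P' : ProjectiveResolution Y) (N : C) {a i b c j d : ℕ}
    (hai : (ComplexShape.up ℕ).prev i = a) (hib : (ComplexShape.up ℕ).next i = b)
    (hcj : (ComplexShape.up ℕ).prev j = c) (hjd : (ComplexShape.up ℕ).next j = d)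
    (φ : (P.complex.linearYonedaObj R N).sc' a i b ⟶ (P'.complex.linearYonedaObj R N).sc' c j d)
    (h₂ : IsIso φ.τ₂) (h₃ : Mono φ.τ₃) :
    ∃ f : ((Ext R C i).obj (Opposite.op X)).obj N ⟶ ((Ext R C j).obj (Opposite.op Y)).obj N,
      Epi f :=
  ⟨(P.isoExt i N).hom ≫ ((P.complex.linearYonedaObj R N).homologyIsoSc' a i b hai hib).hom ≫
    ShortComplex.homologyMap φ ≫
      ((P'.complex.linearYonedaObj R N).homologyIsoSc' c j d hcj hjd).inv ≫ (P'.isoExt j N).inv,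
    inferInstance⟩

lemma exists_epi_ext_succ (hS : S.ShortExact) [Projective S.X₂] (N : C) (i : ℕ) :
    ∃ f : ((Ext R C i).obj (Opposite.op S.X₁)).obj N ⟶
      ((Ext R C (i + 1)).obj (Opposite.op S.X₃)).obj N, Epi f := by
  let Q := ProjectiveResolution.of S.X₁
  have hd := Q.splice_linearYonedaObj_d hS (R := R) N
  -- `Hom(Q.splice hS, N)` in degrees `≥ 1` is `Hom(Q, N)` shifted by one, so identities compare
  -- the two; in the lowest degree the incoming differential of `Hom(Q, N)` is zero.
  rcases i with _ | i
  · let φ : (Q.complex.linearYonedaObj R N).sc' 0 0 1 ⟶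
        ((Q.splice hS).complex.linearYonedaObj R N).sc' 0 1 2 :=
      { τ₁ := 0, τ₂ := 𝟙 _, τ₃ := 𝟙 _
        comm₁₂ := zero_comp.trans (((Q.complex.linearYonedaObj R N).shape 0 0 (by simp)).symm.trans
          (Category.comp_id _).symm)
        comm₂₃ := (Category.id_comp _).trans ((hd 0 1).trans (Category.comp_id _).symm) }
    exact Q.exists_epi_ext_of_hom_sc' (Q.splice hS) N (by simp) (by simp) (by simp) (by simp) φ
      (IsIso.id _) (instMonoId _)
  · let φ : (Q.complex.linearYonedaObj R N).sc' i (i + 1) (i + 2) ⟶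
        ((Q.splice hS).complex.linearYonedaObj R N).sc' (i + 1) (i + 2) (i + 3) :=
      { τ₁ := 𝟙 _, τ₂ := 𝟙 _, τ₃ := 𝟙 _
        comm₁₂ := (Category.id_comp _).trans ((hd i (i + 1)).trans (Category.comp_id _).symm)
        comm₂₃ := (Category.id_comp _).trans ((hd (i + 1) (i + 2)).trans (Category.comp_id _).symm) }
    exact Q.exists_epi_ext_of_hom_sc' (Q.splice hS) N (by simp) (by simp) (by simp) (by simp) φ
      (IsIso.id _) (instMonoId _)

end CategoryTheory.ProjectiveResolution

namespace ModuleCat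

variable {R : Type} [CommRing R] [IsNoetherianRing R]

lemma exists_finite_surjective_extMod_succ (M : ModuleCat R) [Module.Finite R M] :
    ∃ K : ModuleCat R, Module.Finite R K ∧ ∀ (N : ModuleCat R) (i : ℕ),
      ∃ f : extMod R i K N ⟶ extMod R (i + 1) M N, Function.Surjective f := by
  obtain ⟨k, p, hp⟩ := Module.Finite.exists_fin' R M
  have : Projective (ModuleCat.of R (Fin k → R)) := projective_of_free (Pi.basisFun R (Fin k))
  refine ⟨p.shortComplexKer.X₁, Module.Finite.iff_fg.mpr (IsNoetherian.noetherian _), fun N i => ?_⟩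
  obtain ⟨f, hf⟩ :=
    ProjectiveResolution.exists_epi_ext_succ (LinearMap.shortExact_shortComplexKer hp) (R := R) N i
  exact ⟨f, (epi_iff_surjective f).1 hf⟩

lemma smul_extMod_succ_eq_zero {a : R} {i : ℕ}
    (h : ∀ (M N : ModuleCat R), Module.Finite R M → Module.Finite R N →
      ∀ x : extMod R i M N, a • x = 0) (M N : ModuleCat R) (hM : Module.Finite R M)
    (hN : Module.Finite R N) (x : extMod R (i + 1) M N) : a • x = 0 := by
  obtain ⟨K, hK, hKM⟩ := exists_finite_surjective_extMod_succ M
  obtain ⟨f, hf⟩ := hKM N i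
  obtain ⟨y, rfl⟩ := hf x
  rw [← map_smul f.hom, h K N hK hN y, map_zero]

end ModuleCat

/-- `a ∈ ca^n(R)` iff `a` annihilates `Ext^n(M,N)` for all finitely generated `M`, `N`. -/
theorem mem_caIdeal_iff_ann_ext (R : Type) [CommRing R] [IsNoetherianRing R] (n : ℕ) (a : R) :
    a ∈ caIdeal R n ↔ ∀ (M N : ModuleCat R), Module.Finite R M → Module.Finite R N →
      ∀ x : extMod R n M N, a • x = 0 := by
  refine ⟨fun h M N hM hN => h M N hM hN n le_rfl, fun h M N hM hN i hi => ?_⟩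
  induction i, hi using Nat.le_induction generalizing M N with
  | base => exact h M N hM hN
  | succ i _ ih => exact ModuleCat.smul_extMod_succ_eq_zero ih M N hM hN

end
end

section
/- Let (R,m) be a d-dimensional Gorenstein local ring and let t ≥ 1 be such that m^t annihilates all stable Hom groups between maximal Cohen–Macaulay R-modules (Hom modulo maps factoring through projectives). Then m^t ⊆ ca^{d+1}(R), i.e., m^t annihilates Ext_R^{d+1}(A,B) for all finitely generated R-modules A, B. -/
open CategoryTheory IsLocalRing

noncomputable section

/-!
Compute `Ext` with a resolution `P_•` of `A` by finite free modules and let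
`Ω = coker (P_{d+1} → P_d)` be the `d`-th syzygy. Dimension shifting identifies `Ext^i(Ω, R)`
with `Ext^{d+i}(A, R)`, which vanishes for `i > 0` since `R` is Gorenstein; so `Ω` is maximal
Cohen–Macaulay and, for `s ∈ m^t`, `s • 𝟙_Ω` factors through a projective module. Lifting this factorization to
`P_d` yields `w : P_d → im d_{d+1}` which is multiplication by `s` on `im d_{d+1}`. A cocycle
`f : P_{d+1} → B` factors as `f̄ ∘ d_{d+1}`, hence `s • f = (f̄ ∘ w) ∘ d_{d+1}` is a coboundary.
-/

namespace Submodule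

variable {R F P : Type*} [CommRing R] [AddCommGroup F] [Module R F] [AddCommGroup P] [Module R P]

theorem exists_comp_subtype_eq_smul_of_factors [Module.Projective R P] (N : Submodule R F)
    {s : R} (g : (F ⧸ N) →ₗ[R] P) (h : P →ₗ[R] F ⧸ N) (hs : s • LinearMap.id = h ∘ₗ g) :
    ∃ w : F →ₗ[R] N, w ∘ₗ N.subtype = s • LinearMap.id := by
  obtain ⟨h', hh'⟩ := Module.projective_lifting_property N.mkQ h N.mkQ_surjective
  let w : F →ₗ[R] F := s • LinearMap.id - h' ∘ₗ g ∘ₗ N.mkQ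
  have hw : ∀ x, w x ∈ N := fun x => by
    have hsx : s • N.mkQ x = h (g (N.mkQ x)) := congr($hs (N.mkQ x))
    have hlift : N.mkQ (h' (g (N.mkQ x))) = h (g (N.mkQ x)) := congr($hh' (g (N.mkQ x)))
    rw [← N.ker_mkQ, LinearMap.mem_ker]
    change N.mkQ (s • x - h' (g (N.mkQ x))) = 0
    rw [map_sub, map_smul, hlift, hsx, sub_self]
  refine ⟨w.codRestrict N hw, LinearMap.ext fun n => Subtype.ext ?_⟩
  simp [w, (Quotient.mk_eq_zero N).2 n.2]

end Submodule

namespace LinearMap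

variable {R F₁ F₀ B P : Type*} [CommRing R] [AddCommGroup F₁] [Module R F₁] [AddCommGroup F₀]
  [Module R F₀] [AddCommGroup B] [Module R B] [AddCommGroup P] [Module R P]

theorem exists_comp_rangeRestrict_eq_of_ker_le (d : F₁ →ₗ[R] F₀) (f : F₁ →ₗ[R] B)
    (hf : ker d ≤ ker f) : ∃ φ : range d →ₗ[R] B, φ ∘ₗ d.rangeRestrict = f :=
  ⟨(ker d).liftQ f hf ∘ₗ d.quotKerEquivRange.symm.toLinearMap, LinearMap.ext fun v => by
    simp [rangeRestrict, codRestrict]⟩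

theorem exists_comp_eq_smul_of_ker_le [Module.Projective R P] (d : F₁ →ₗ[R] F₀)
    (f : F₁ →ₗ[R] B) (hf : ker d ≤ ker f) {s : R} (g : (F₀ ⧸ range d) →ₗ[R] P)
    (h : P →ₗ[R] F₀ ⧸ range d) (hs : s • LinearMap.id = h ∘ₗ g) :
    ∃ e : F₀ →ₗ[R] B, e ∘ₗ d = s • f := by
  obtain ⟨w, hw⟩ := (range d).exists_comp_subtype_eq_smul_of_factors g h hs
  obtain ⟨φ, hφ⟩ := exists_comp_rangeRestrict_eq_of_ker_le d f hf
  refine ⟨φ ∘ₗ w, LinearMap.ext fun v => ?_⟩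
  have hwv : w (d v) = s • d.rangeRestrict v := congr($hw (d.rangeRestrict v))
  simp [hwv, ← hφ]

end LinearMap

namespace CategoryTheory.ProjectiveResolution

variable {R : Type} [CommRing R]

section OfExact

variable (F : ℕ → ModuleCat R) (d : ∀ n, F (n + 1) ⟶ F n)
  (hd : ∀ n, LinearMap.range (d (n + 1)).hom = LinearMap.ker (d n).hom)

def ofExactComplex : ChainComplex (ModuleCat R) ℕ :=
  ChainComplex.of F d fun n => by
    ext x
    exact (hd n).le (LinearMap.mem_range_self _ x)

theorem ofExactComplex_d (n : ℕ) : (ofExactComplex F d hd).d (n + 1) n = d n :=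
  ChainComplex.of_d F d n

def ofExact [∀ n, Projective (F n)] (Z : ModuleCat R) (ε : F 0 ⟶ Z) (hε : Function.Surjective ε.hom)
    (hε_exact : LinearMap.range (d 0).hom = LinearMap.ker ε.hom) :
    ProjectiveResolution Z where
  complex := ofExactComplex F d hd
  projective n := inferInstanceAs (Projective (F n))
  π := (ChainComplex.toSingle₀Equiv _ _).symm ⟨ε, by
    rw [ofExactComplex_d]
    ext x
    exact hε_exact.le (LinearMap.mem_range_self _ x)⟩
  quasiIso := ⟨fun n => by
    cases n with
    | zero =>
      rw [ChainComplex.quasiIsoAt₀_iff, ShortComplex.quasiIso_iff_of_zeros' _ rfl rfl rfl,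
        ShortComplex.moduleCat_exact_iff_range_eq_ker, ModuleCat.epi_iff_surjective]
      simpa [ofExactComplex_d] using ⟨hε_exact, hε⟩
    | succ n =>
      rw [quasiIsoAt_iff_exactAt' _ _ (ChainComplex.exactAt_succ_single_obj _ _),
        HomologicalComplex.exactAt_iff' _ (n + 1 + 1) (n + 1) n (by simp) (by simp),
        ShortComplex.moduleCat_exact_iff_range_eq_ker]
      dsimp only [HomologicalComplex.sc', HomologicalComplex.shortComplexFunctor']
      rw [ofExactComplex_d, ofExactComplex_d]
      exact hd n⟩

end OfExact

variable {Z : ModuleCat R} (PR : ProjectiveResolution Z)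

theorem range_d_eq_ker_d (n : ℕ) :
    LinearMap.range (PR.complex.d (n + 2) (n + 1)).hom =
      LinearMap.ker (PR.complex.d (n + 1) n).hom :=
  ((PR.complex.exactAt_iff' (n + 2) (n + 1) n (by simp) (by simp)).1
    (PR.complex_exactAt_succ n)).moduleCat_range_eq_ker

def syzygy (n : ℕ) : ModuleCat R :=
  ModuleCat.of R (PR.complex.X n ⧸ LinearMap.range (PR.complex.d (n + 1) n).hom)

theorem finite_syzygy (n : ℕ) [Module.Finite R (PR.complex.X n)] :
    Module.Finite R (PR.syzygy n) :=
  Module.Finite.of_surjective _ (Submodule.mkQ_surjective _)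

def syzygyResolution (n : ℕ) : ProjectiveResolution (PR.syzygy n) :=
  ofExact (fun j => PR.complex.X (n + j)) (fun j => PR.complex.d (n + j + 1) (n + j))
    (fun j => PR.range_d_eq_ker_d (n + j)) (PR.syzygy n) (ModuleCat.ofHom (Submodule.mkQ _))
    (Submodule.mkQ_surjective _) (Submodule.ker_mkQ _).symm

theorem syzygyResolution_complex_d (n j : ℕ) :
    (PR.syzygyResolution n).complex.d (j + 1) j = PR.complex.d (n + j + 1) (n + j) :=
  ofExactComplex_d _ _ (fun j => PR.range_d_eq_ker_d (n + j)) j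

def extModIsoHomology (n : ℕ) (Y : ModuleCat R) :
    extMod R (n + 1) Z Y ≅ ((PR.complex.linearYonedaObj R Y).sc' n (n + 1) (n + 2)).homology :=
  PR.isoExt (n + 1) Y ≪≫ HomologicalComplex.homologyIsoSc' _ n (n + 1) (n + 2) (by simp) (by simp)

def syzygyScIso (n j : ℕ) (Y : ModuleCat R) :
    ((PR.syzygyResolution n).complex.linearYonedaObj R Y).sc' j (j + 1) (j + 2) ≅
      (PR.complex.linearYonedaObj R Y).sc' (n + j) (n + j + 1) (n + j + 2) :=
  ShortComplex.isoMk (Iso.refl _) (Iso.refl _) (Iso.refl _)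
    (by ext f; simp [syzygyResolution_complex_d]; rfl)
    (by ext f; simp [syzygyResolution_complex_d]; rfl)

def extModSyzygyIso (n j : ℕ) (Y : ModuleCat R) :
    extMod R (j + 1) (PR.syzygy n) Y ≅ extMod R (n + j + 1) Z Y :=
  (PR.syzygyResolution n).extModIsoHomology j Y ≪≫
    ShortComplex.homologyMapIso (PR.syzygyScIso n j Y) ≪≫ (PR.extModIsoHomology (n + j) Y).symm

theorem smul_extMod_succ_eq_zero (n : ℕ) (Y : ModuleCat R) {s : R} {P : Type} [AddCommGroup P]
    [Module R P] [Module.Projective R P] (g : PR.syzygy n →ₗ[R] P) (h : P →ₗ[R] PR.syzygy n)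
    (hs : s • LinearMap.id = h ∘ₗ g) (x : extMod R (n + 1) Z Y) : s • x = 0 := by
  let toH := (PR.extModIsoHomology n Y ≪≫ ShortComplex.moduleCatHomologyIso _).toLinearEquiv
  apply toH.injective
  rw [map_smul, map_zero]
  obtain ⟨⟨f, hf⟩, hx⟩ := Submodule.Quotient.mk_surjective _ (toH x)
  rw [← hx]
  refine (Submodule.Quotient.mk_smul _ s _).symm.trans ((Submodule.Quotient.mk_eq_zero _).2 ?_)
  have hker : LinearMap.ker (PR.complex.d (n + 1) n).hom ≤
      LinearMap.ker (f : PR.complex.X (n + 1) ⟶ Y).hom := by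
    have hf' : PR.complex.d (n + 2) (n + 1) ≫ (f : PR.complex.X (n + 1) ⟶ Y) = 0 :=
      LinearMap.mem_ker.1 hf
    intro y hy
    obtain ⟨z, rfl⟩ := (PR.range_d_eq_ker_d n).ge hy
    exact ConcreteCategory.congr_hom hf' z
  obtain ⟨e, he⟩ := LinearMap.exists_comp_eq_smul_of_ker_le _ _ hker g h hs
  exact ⟨ModuleCat.ofHom e, Subtype.ext (ModuleCat.hom_ext he)⟩

end CategoryTheory.ProjectiveResolution

structure FinFreeCover (R : Type) [CommRing R] where
  obj : ModuleCat R
  rank : ℕ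
  π : (Fin rank → R) →ₗ[R] obj
  surjective_π : Function.Surjective π

namespace FinFreeCover

variable {R : Type} [CommRing R]

def of (M : ModuleCat R) [Module.Finite R M] : FinFreeCover R where
  obj := M
  rank := (Module.Finite.exists_fin' R M).choose
  π := (Module.Finite.exists_fin' R M).choose_spec.choose
  surjective_π := (Module.Finite.exists_fin' R M).choose_spec.choose_spec

variable [IsNoetherianRing R] (A : ModuleCat R) [Module.Finite R A]

def iterate : ℕ → FinFreeCover R
  | 0 => of A
  | n + 1 => of (ModuleCat.of R (LinearMap.ker (iterate n).π))

def iterateToKer (n : ℕ) :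
    (Fin (iterate A (n + 1)).rank → R) →ₗ[R] LinearMap.ker (iterate A n).π :=
  (iterate A (n + 1)).π

theorem iterateToKer_surjective (n : ℕ) : Function.Surjective (iterateToKer A n) :=
  (iterate A (n + 1)).surjective_π

theorem range_subtype_comp_iterateToKer (n : ℕ) :
    LinearMap.range ((LinearMap.ker (iterate A n).π).subtype ∘ₗ iterateToKer A n) =
      LinearMap.ker (iterate A n).π := by
  rw [LinearMap.range_comp_of_range_eq_top _
    (LinearMap.range_eq_top.2 (iterateToKer_surjective A n)), Submodule.range_subtype]

theorem ker_subtype_comp_iterateToKer (n : ℕ) :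
    LinearMap.ker ((LinearMap.ker (iterate A n).π).subtype ∘ₗ iterateToKer A n) =
      LinearMap.ker (iterate A (n + 1)).π :=
  LinearMap.ker_comp_of_ker_eq_bot _ (Submodule.ker_subtype _)

def resolution : ProjectiveResolution A :=
  ProjectiveResolution.ofExact (fun n => ModuleCat.of R (Fin (iterate A n).rank → R))
    (fun n => ModuleCat.ofHom ((LinearMap.ker (iterate A n).π).subtype ∘ₗ iterateToKer A n))
    (fun n => by
      simp only [ModuleCat.hom_ofHom, range_subtype_comp_iterateToKer,
        ker_subtype_comp_iterateToKer])
    A (ModuleCat.ofHom (iterate A 0).π) (iterate A 0).surjective_π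
    (range_subtype_comp_iterateToKer A 0)

instance finite_resolution_X (n : ℕ) : Module.Finite R ((resolution A).complex.X n) :=
  inferInstanceAs (Module.Finite R (Fin _ → R))

end FinFreeCover

theorem gorenstein_stableHom_ann_general (R : Type) [CommRing R] [IsNoetherianRing R] [IsLocalRing R]
    (d : ℕ)
    (hGor : ∀ M : ModuleCat R, Module.Finite R M →
      ∀ i : ℕ, d < i → Subsingleton (extMod R i M (ModuleCat.of R R)))
    (t : ℕ)
    (hann : ∀ s ∈ maximalIdeal R ^ t, ∀ M N : ModuleCat R,
      Module.Finite R M → Module.Finite R N →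
      (∀ i : ℕ, 0 < i → Subsingleton (extMod R i M (ModuleCat.of R R))) →
      (∀ i : ℕ, 0 < i → Subsingleton (extMod R i N (ModuleCat.of R R))) →
      ∀ f : M →ₗ[R] N, ∃ (P : Type) (_ : AddCommGroup P) (_ : Module R P),
        Module.Projective R P ∧
        ∃ (g : M →ₗ[R] P) (h : P →ₗ[R] N), s • f = h.comp g) :
    ∀ s ∈ maximalIdeal R ^ t, ∀ A B : ModuleCat R,
      Module.Finite R A → Module.Finite R B →
      ∀ x : extMod R (d + 1) A B, s • x = 0 := by
  intro s hs A B hA _ x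
  let PR := FinFreeCover.resolution A
  have hΩ : ∀ i : ℕ, 0 < i → Subsingleton (extMod R i (PR.syzygy d) (ModuleCat.of R R)) := by
    rintro (_ | j) hj
    · omega
    have := hGor A hA (d + j + 1) (by omega)
    exact (PR.extModSyzygyIso d j _).toLinearEquiv.injective.subsingleton
  obtain ⟨P, _, _, _, g, h, hs⟩ :=
    hann s hs _ _ (PR.finite_syzygy d) (PR.finite_syzygy d) hΩ hΩ LinearMap.id
  exact PR.smul_extMod_succ_eq_zero d B g h hs x

/-- Over a Gorenstein local ring of dimension `d`, if `m^t` annihilates all stable Hom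
groups between maximal Cohen–Macaulay modules, then `m^t ⊆ ca^{d+1}(R)`. -/
theorem gorenstein_stableHom_ann (R : Type) [CommRing R] [IsNoetherianRing R] [IsLocalRing R]
    (d : ℕ) (hd : ringKrullDim R = d)
    (hGor : ∀ M : ModuleCat R, Module.Finite R M →
      ∀ i : ℕ, d < i → Subsingleton (extMod R i M (ModuleCat.of R R)))
    (t : ℕ) (ht : 1 ≤ t)
    (hann : ∀ s ∈ maximalIdeal R ^ t, ∀ M N : ModuleCat R,
      Module.Finite R M → Module.Finite R N →
      (∀ i : ℕ, 0 < i → Subsingleton (extMod R i M (ModuleCat.of R R))) →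
      (∀ i : ℕ, 0 < i → Subsingleton (extMod R i N (ModuleCat.of R R))) →
      ∀ f : M →ₗ[R] N, ∃ (P : Type) (_ : AddCommGroup P) (_ : Module R P),
        Module.Projective R P ∧
        ∃ (g : M →ₗ[R] P) (h : P →ₗ[R] N), s • f = h.comp g) :
    ∀ s ∈ maximalIdeal R ^ t, ∀ A B : ModuleCat R,
      Module.Finite R A → Module.Finite R B →
      ∀ x : extMod R (d + 1) A B, s • x = 0 :=
  gorenstein_stableHom_ann_general R d hGor t hann

end
end
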